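/- arXiv:1211.6043 — 2 statements merged into one kernel-verified Lean document; each statement's English description precedes it below -/
import Mathlib

section
/- Let x > 0, J ≥ 1 an integer, and real numbers m_1,…,m_J, n_1,…,n_J ∈ [0, x] with ∑ m_i + ∑ n_j = x, each m_i ≤ x/J, and n_1 ≥ n_2 ≥ … ≥ n_J. Let 0 < δ < min((4x−3)/12, (x−1/2)/6, 1/4) and suppose x/J ≤ x − 1/2 − 4δ. If no subsum ∑_{i∈I} m_i + ∑_{j∈J'} n_j lies in the interval [2δ, x − 1/2 − 2δ], then ∑_i m_i < 2δ. -/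
/-! Adding the `m i` one at a time, the partial sums climb from `0` to `∑ m i` in steps of at
most `x / J`. If `∑ m i ≥ 2δ`, the first partial sum reaching `2δ` is below `2δ + x / J`, hence
at most `x - 1/2 - 2δ`: a subsum in the forbidden interval. -/

theorem Finset.exists_subset_sum_mem_Ico {ι : Type*} [DecidableEq ι] (s : Finset ι) (f : ι → ℝ)
    {a c : ℝ} (ha : 0 < a) (hf : ∀ i ∈ s, f i ≤ c) (hs : a ≤ ∑ i ∈ s, f i) :
    ∃ t ⊆ s, ∑ i ∈ t, f i ∈ Set.Ico a (a + c) := by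
  induction s using Finset.induction_on with
  | empty => simp only [Finset.sum_empty] at hs; linarith
  | insert j s hj ih =>
    by_cases hsa : a ≤ ∑ i ∈ s, f i
    · obtain ⟨t, hts, ht⟩ := ih (fun i hi => hf i (Finset.mem_insert_of_mem hi)) hsa
      exact ⟨t, hts.trans (Finset.subset_insert j s), ht⟩
    · refine ⟨insert j s, subset_rfl, hs, ?_⟩
      rw [Finset.sum_insert hj]
      linarith [hf j (Finset.mem_insert_self j s)]

theorem stmt_1_general (x : ℝ) (J : ℕ) (m n : Fin J → ℝ)
    (hmJ : ∀ i, m i ≤ x / J)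
    (δ : ℝ) (hδ0 : 0 < δ)
    (hJδ : x / J ≤ x - 1 / 2 - 4 * δ)
    (hno : ∀ I I' : Finset (Fin J),
      (∑ i ∈ I, m i + ∑ j ∈ I', n j) ∉ Set.Icc (2 * δ) (x - 1 / 2 - 2 * δ)) :
    ∑ i, m i < 2 * δ := by
  by_contra! h
  obtain ⟨I, -, hIlo, hIhi⟩ := Finset.univ.exists_subset_sum_mem_Ico m (by linarith)
    (fun i _ => hmJ i) h
  apply hno I ∅
  rw [Finset.sum_empty, add_zero]
  exact ⟨hIlo, by linarith⟩

/-- If no subsum of the `m i`'s and `n j`'s lies in `[2δ, x - 1/2 - 2δ]`, then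
`∑ m i < 2δ`. -/
theorem stmt_1 (x : ℝ) (J : ℕ) (hJ : 1 ≤ J) (m n : Fin J → ℝ)
    (hm0 : ∀ i, m i ∈ Set.Icc 0 x) (hn0 : ∀ j, n j ∈ Set.Icc 0 x)
    (hsum : ∑ i, m i + ∑ j, n j = x)
    (hmJ : ∀ i, m i ≤ x / J)
    (hmono : ∀ i j : Fin J, i ≤ j → n j ≤ n i)
    (δ : ℝ) (hδ0 : 0 < δ)
    (hδ : δ < min (min ((4 * x - 3) / 12) ((x - 1 / 2) / 6)) (1 / 4))
    (hJδ : x / J ≤ x - 1 / 2 - 4 * δ)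
    (hno : ∀ I I' : Finset (Fin J),
      (∑ i ∈ I, m i + ∑ j ∈ I', n j) ∉ Set.Icc (2 * δ) (x - 1 / 2 - 2 * δ)) :
    ∑ i, m i < 2 * δ :=
  stmt_1_general x J m n hmJ δ hδ0 hJδ hno
end

section
/- Let p be prime and K : ℤ/pℤ → ℂ a p-periodic function. For any integers N₁ < N₂ with N₂ − N₁ ≤ p, the incomplete sum ∑_{N₁ < n ≤ N₂} K(n) satisfies |∑_{N₁ < n ≤ N₂} K(n)| ≤ ((N₂−N₁)/p)|K̂(0)|·√p + ∑_{0 < |h| ≤ p/2} min(1/|h|, (N₂−N₁)/p)·O(1)·|K̂(h)|·√p, up to absolute constants, where K̂(h) = p^{-1/2} ∑_{x mod p} K(x) e(−hx/p). -/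
/-!
Fourier inversion writes `K(n) = p^{-1/2} ∑_h K̂(h) e(hn/p)`, so the incomplete sum equals
`p^{-1/2} ∑_h K̂(h) S(h)` with `S(h) = ∑_{N₁ < n ≤ N₂} e(hn/p)`. Trivially `|S(h)| ≤ N₂ - N₁`, and
for `h ≠ 0` the geometric sum gives `|S(h)| ≤ 2 / |e(h/p) - 1| = 1 / |sin(π h/p)|`, which is at most
`p / (2|h|)` by Jordan's inequality once `h` is represented in `(-p/2, p/2]`.
-/

open scoped BigOperators

/-- The unitarily normalized discrete Fourier transform
`K̂(h) = p^{-1/2} ∑_{x mod p} K(x) e(-hx/p)`. -/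
noncomputable def dftZMod (p : ℕ) (K : ZMod p → ℂ) (h : ZMod p) : ℂ :=
  if hp : p = 0 then 0 else
    haveI : NeZero p := ⟨hp⟩
    (Real.sqrt p)⁻¹ *
      ∑ x : ZMod p, K x * Complex.exp (-(2 * Real.pi * Complex.I) * ((h.val : ℂ) * (x.val : ℂ) / (p : ℂ)))

open Finset
open scoped ZMod

theorem sub_one_mul_sum_Ioc_zpow {𝕜 : Type*} [DivisionRing 𝕜] {z : 𝕜} (hz : z ≠ 0) {a b : ℤ}
    (hab : a ≤ b) : (z - 1) * ∑ n ∈ Ioc a b, z ^ n = z ^ (b + 1) - z ^ (a + 1) := by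
  induction b, hab using Int.leInduction with
  | base => simp
  | succ b hab ih =>
    rw [← insert_Ioc_right_eq_Ioc_add_one hab, sum_insert (by simp), mul_add, ih,
      add_comm (b + 1) 1, zpow_one_add₀ hz (b + 1)]
    noncomm_ring

theorem norm_sum_Ioc_zpow_le {𝕜 : Type*} [NormedDivisionRing 𝕜] {z : 𝕜} (hz : ‖z‖ = 1)
    (hz1 : z ≠ 1) {a b : ℤ} (hab : a ≤ b) : ‖∑ n ∈ Ioc a b, z ^ n‖ ≤ 2 / ‖z - 1‖ := by
  have hz0 : z ≠ 0 := norm_ne_zero_iff.1 (by simp [hz])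
  have hd : 0 < ‖z - 1‖ := norm_pos_iff.2 (sub_ne_zero.2 hz1)
  rw [le_div_iff₀ hd, mul_comm, ← norm_mul, sub_one_mul_sum_Ioc_zpow hz0 hab]
  calc ‖z ^ (b + 1) - z ^ (a + 1)‖ ≤ ‖z ^ (b + 1)‖ + ‖z ^ (a + 1)‖ := norm_sub_le _ _
    _ = 2 := by simp [norm_zpow, hz]; norm_num

namespace ZMod

variable {p : ℕ} [NeZero p]

theorem four_mul_abs_valMinAbs_div_le_norm_stdAddChar_sub_one (h : ZMod p) :
    4 * |(h.valMinAbs : ℝ)| / p ≤ ‖stdAddChar h - 1‖ := by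
  have hp : (0 : ℝ) < p := Nat.cast_pos.2 (NeZero.pos p)
  have ht : |(h.valMinAbs : ℝ) * 2| ≤ p := by
    obtain ⟨hlo, hhi⟩ := h.valMinAbs_mem_Ioc
    exact abs_le.2 ⟨by exact_mod_cast hlo.le, by exact_mod_cast hhi⟩
  set x : ℝ := Real.pi * h.valMinAbs / p
  have hx : |x| = Real.pi * |(h.valMinAbs : ℝ)| / p := by
    rw [abs_div, abs_mul, abs_of_pos Real.pi_pos, abs_of_pos hp]
  have hψ : stdAddChar h = Complex.exp (Complex.I * (2 * x : ℝ)) := by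
    rw [← h.coe_valMinAbs, stdAddChar_coe]
    push_cast [x]
    ring_nf
  calc 4 * |(h.valMinAbs : ℝ)| / p = 2 * (2 / Real.pi * |x|) := by
        rw [hx]; field_simp; ring
    _ ≤ 2 * |Real.sin x| := by
        gcongr
        refine Real.mul_abs_le_abs_sin ?_
        rw [abs_mul, abs_two] at ht
        rw [hx, div_le_iff₀ hp]
        nlinarith [Real.pi_pos]
    _ = ‖stdAddChar h - 1‖ := by
        rw [hψ, Complex.norm_exp_I_mul_ofReal_sub_one, mul_div_cancel_left₀ _ two_ne_zero,
          norm_mul, Real.norm_two, Real.norm_eq_abs]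

theorem norm_sum_Ioc_stdAddChar_le {h : ZMod p} (hh : h ≠ 0) {a b : ℤ} (hab : a ≤ b) :
    ‖∑ n ∈ Ioc a b, stdAddChar (h * (n : ZMod p))‖ ≤
      p * min (1 / |(h.valMinAbs : ℝ)|) (((b - a : ℤ) : ℝ) / p) := by
  have hp : (0 : ℝ) < p := Nat.cast_pos.2 (NeZero.pos p)
  have ht : 0 < |(h.valMinAbs : ℝ)| := by
    simpa [abs_pos, Int.cast_ne_zero, valMinAbs_eq_zero] using hh
  have hz : ‖(stdAddChar h : ℂ)‖ = 1 := by rw [stdAddChar_apply, Circle.norm_coe]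
  have hd := four_mul_abs_valMinAbs_div_le_norm_stdAddChar_sub_one h
  have hz1 : (stdAddChar h : ℂ) ≠ 1 := fun h1 => by
    rw [h1, sub_self, norm_zero] at hd
    exact (div_pos (by positivity) hp).not_ge hd
  have hpow : ∀ n : ℤ, stdAddChar (h * (n : ZMod p)) = (stdAddChar h : ℂ) ^ n := fun n => by
    rw [mul_comm, ← zsmul_eq_mul, AddChar.map_zsmul_eq_zpow]
  simp_rw [hpow]
  rw [mul_min_of_nonneg _ _ hp.le, mul_div_cancel₀ _ hp.ne']
  refine le_min ?_ ?_
  · calc ‖∑ n ∈ Ioc a b, (stdAddChar h : ℂ) ^ n‖ ≤ 2 / ‖stdAddChar h - 1‖ :=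
          norm_sum_Ioc_zpow_le hz hz1 hab
      _ ≤ 2 / (4 * |(h.valMinAbs : ℝ)| / p) := by gcongr
      _ ≤ p * (1 / |(h.valMinAbs : ℝ)|) := by
          rw [div_div_eq_mul_div, mul_one_div, div_le_div_iff₀ (by positivity) ht]
          nlinarith
  · calc ‖∑ n ∈ Ioc a b, (stdAddChar h : ℂ) ^ n‖ ≤ ∑ n ∈ Ioc a b, ‖(stdAddChar h : ℂ) ^ n‖ :=
          norm_sum_le _ _
      _ = ((b - a : ℤ) : ℝ) := by
          simp only [norm_zpow, hz, one_zpow, sum_const, Int.card_Ioc, nsmul_eq_mul, mul_one]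
          exact_mod_cast Int.toNat_of_nonneg (sub_nonneg.2 hab)

theorem dftZMod_eq_inv_sqrt_mul_dft (K : ZMod p → ℂ) (h : ZMod p) :
    dftZMod p K h = (Real.sqrt p : ℂ)⁻¹ * 𝓕 K h := by
  rw [dftZMod, dif_neg (NeZero.ne p), dft_apply, Complex.ofReal_inv]
  congr 1
  refine sum_congr rfl fun x _ => ?_
  have hcast : -(x * h) = ((-((h.val : ℤ) * x.val) : ℤ) : ZMod p) := by
    push_cast
    rw [natCast_zmod_val, natCast_zmod_val, mul_comm]
  rw [smul_eq_mul, mul_comm, hcast, stdAddChar_coe]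
  push_cast
  ring_nf

theorem eq_inv_sqrt_mul_sum_dftZMod (K : ZMod p → ℂ) (k : ZMod p) :
    K k = (Real.sqrt p : ℂ)⁻¹ * ∑ h, dftZMod p K h * stdAddChar (h * k) := by
  have hsqrt : (p : ℂ)⁻¹ = (Real.sqrt p : ℂ)⁻¹ * (Real.sqrt p : ℂ)⁻¹ := by
    rw [← mul_inv, ← Complex.ofReal_mul, Real.mul_self_sqrt (Nat.cast_nonneg p),
      Complex.ofReal_natCast]
  conv_lhs => rw [← (dft (N := p) (E := ℂ)).symm_apply_apply K]
  simp_rw [invDFT_apply, dftZMod_eq_inv_sqrt_mul_dft, smul_eq_mul, hsqrt, mul_sum]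
  exact sum_congr rfl fun h _ => by ring

theorem sum_Ioc_eq_inv_sqrt_mul_sum_dftZMod (K : ZMod p → ℂ) (a b : ℤ) :
    ∑ n ∈ Ioc a b, K (n : ZMod p) =
      (Real.sqrt p : ℂ)⁻¹ * ∑ h, dftZMod p K h * ∑ n ∈ Ioc a b, stdAddChar (h * (n : ZMod p)) := by
  simp_rw [mul_sum]
  rw [sum_comm]
  exact sum_congr rfl fun n _ => by rw [eq_inv_sqrt_mul_sum_dftZMod K n, mul_sum]

/-- `-(p : ℤ) / 2` rounds down, so for odd `p` the window meets one residue class twice; it still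
contains every nonzero `valMinAbs`. -/
theorem sum_erase_zero_comp_valMinAbs_le (f : ℤ → ℝ)
    (hf : ∀ t ∈ (Icc (-(p : ℤ) / 2) ((p : ℤ) / 2)).filter (· ≠ 0), 0 ≤ f t) :
    ∑ h ∈ univ.erase (0 : ZMod p), f h.valMinAbs ≤
      ∑ t ∈ (Icc (-(p : ℤ) / 2) ((p : ℤ) / 2)).filter (· ≠ 0), f t := by
  rw [← sum_image (f := f) fun x _ y _ hxy => injective_valMinAbs hxy]
  refine sum_le_sum_of_subset_of_nonneg (fun t ht => ?_) fun t ht _ => hf t ht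
  obtain ⟨h, hh, rfl⟩ := mem_image.1 ht
  have habs := h.natAbs_valMinAbs_le
  simp only [mem_filter, mem_Icc, ne_eq, valMinAbs_eq_zero]
  exact ⟨by omega, (mem_erase.1 hh).1⟩

theorem norm_sum_Ioc_le_sum_dftZMod (K : ZMod p → ℂ) {a b : ℤ} (hab : a ≤ b) :
    ‖∑ n ∈ Ioc a b, K (n : ZMod p)‖ ≤
      ((b - a : ℤ) : ℝ) / p * ‖dftZMod p K 0‖ * Real.sqrt p + ∑ h ∈ univ.erase (0 : ZMod p),
        min (1 / |(h.valMinAbs : ℝ)|) (((b - a : ℤ) : ℝ) / p) * ‖dftZMod p K h‖ * Real.sqrt p := by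
  have hp : (0 : ℝ) < p := Nat.cast_pos.2 (NeZero.pos p)
  set N : ℝ := ((b - a : ℤ) : ℝ)
  set S : ZMod p → ℂ := fun h => ∑ n ∈ Ioc a b, stdAddChar (h * (n : ZMod p))
  have hS0 : ‖S 0‖ = N := by
    simp only [S, zero_mul, AddChar.map_zero_eq_one, sum_const, Int.card_Ioc, nsmul_eq_mul,
      mul_one, Complex.norm_natCast, N]
    exact_mod_cast Int.toNat_of_nonneg (sub_nonneg.2 hab)
  have hsqrt : (Real.sqrt p)⁻¹ * p = Real.sqrt p := by
    rw [inv_mul_eq_div, div_eq_iff (by positivity), Real.mul_self_sqrt hp.le]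
  rw [sum_Ioc_eq_inv_sqrt_mul_sum_dftZMod, ← add_sum_erase _ _ (mem_univ 0)]
  calc ‖(Real.sqrt p : ℂ)⁻¹ * (dftZMod p K 0 * S 0 + ∑ h ∈ univ.erase 0, dftZMod p K h * S h)‖
      ≤ (Real.sqrt p)⁻¹ * (‖dftZMod p K 0‖ * N +
          ∑ h ∈ univ.erase 0, ‖dftZMod p K h‖ * (p * min (1 / |(h.valMinAbs : ℝ)|) (N / p))) := by
        rw [norm_mul, norm_inv, Complex.norm_real, Real.norm_of_nonneg (by positivity)]
        gcongr
        refine (norm_add_le _ _).trans (add_le_add (by rw [norm_mul, hS0]) ?_)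
        refine (norm_sum_le _ _).trans (sum_le_sum fun h hh => ?_)
        rw [norm_mul]
        gcongr
        exact norm_sum_Ioc_stdAddChar_le (mem_erase.1 hh).1 hab
    _ = _ := by
        rw [mul_add, mul_sum]
        congr 1
        · field_simp
          rw [Real.sq_sqrt hp.le]
          ring
        · refine sum_congr rfl fun h _ => ?_
          linear_combination (‖dftZMod p K h‖ * min (1 / |(h.valMinAbs : ℝ)|) (N / p)) * hsqrt

end ZMod

/-- Completion (Pólya–Vinogradov) method: an incomplete sum of a `p`-periodic
function over an interval of length `≤ p` is bounded by the `h = 0` term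
weighted by `N/p` plus the sum of `|K̂(h)|√p` weighted by `min(1/|h|, N/p)`
over `0 < |h| ≤ p/2`, up to an absolute constant. -/
theorem stmt_12 :
    ∃ C : ℝ, 0 < C ∧ ∀ (p : ℕ), p.Prime → ∀ (K : ZMod p → ℂ) (N₁ N₂ : ℤ),
      N₁ < N₂ → N₂ - N₁ ≤ (p : ℤ) →
      ‖∑ n ∈ Finset.Ioc N₁ N₂, K (n : ZMod p)‖ ≤
        (((N₂ - N₁ : ℤ) : ℝ) / p) * ‖dftZMod p K 0‖ * Real.sqrt p +
          C * ∑ h ∈ (Finset.Icc (-(p : ℤ) / 2) ((p : ℤ) / 2)).filter (· ≠ 0),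
            min (1 / |(h : ℝ)|) (((N₂ - N₁ : ℤ) : ℝ) / p) *
              ‖dftZMod p K (h : ZMod p)‖ * Real.sqrt p := by
  refine ⟨1, one_pos, fun p hp K N₁ N₂ hN _ => ?_⟩
  have : NeZero p := ⟨hp.ne_zero⟩
  refine (ZMod.norm_sum_Ioc_le_sum_dftZMod K hN.le).trans (add_le_add le_rfl ?_)
  have hreindex := ZMod.sum_erase_zero_comp_valMinAbs_le (p := p)
    (fun t => min (1 / |(t : ℝ)|) (((N₂ - N₁ : ℤ) : ℝ) / p) * ‖dftZMod p K t‖ * Real.sqrt p)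
    fun t _ => by positivity
  simpa only [ZMod.coe_valMinAbs, one_mul] using hreindex
end
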